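/- Capture lemma: Let U ⊆ ℕ^[∞] be a selective ultrafilter and let D be a dense open subset of the Mathias poset M_U. Then for every finite a ⊆ ℕ such that [a,B] ≠ ∅ for some B ∈ U, there exists A ∈ U that captures (a,D), i.e. [a,A] ≠ ∅ and for every B ∈ [a,A] there exists m > |a| such that (r_m(B),A) ∈ D. -/

import Mathlib

open Set

/-- `ellR n A` : the set of the `n` least elements of `A ⊆ ℕ` (the approximation `rₙ(A)`). -/
noncomputable def ellR (n : ℕ) (A : Set ℕ) : Finset ℕ :=
  (Finset.range n).image (Nat.nth (· ∈ A))

/-- `a ⊏ B` : the finite set `a` is an initial segment of `B`. -/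
def IsInitSeg (a : Finset ℕ) (B : Set ℕ) : Prop :=
  ↑a ⊆ B ∧ ∀ x ∈ B, x ∉ a → ∀ y ∈ a, y < x

/-- The Ellentuck neighborhood `[a, A] = {B ∈ ℕ^[∞] : a ⊏ B ∧ B ⊆ A}`. -/
def ENbhd (a : Finset ℕ) (A : Set ℕ) : Set (Set ℕ) :=
  {B | B.Infinite ∧ IsInitSeg a B ∧ B ⊆ A}

/-- `[n, A] := [rₙ(A), A]`. -/
noncomputable def ENbhdN (n : ℕ) (A : Set ℕ) : Set (Set ℕ) :=
  ENbhd (ellR n A) A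

/-- `depth_A(a)` : the least `n` with `a ⊆ rₙ(A)`. -/
noncomputable def depth (A : Set ℕ) (a : Finset ℕ) : ℕ :=
  sInf {n | a ⊆ ellR n A}

/-- The one-step extensions of `a` inside `B`: the sets `a ∪ {x}` with `x ∈ B` greater
than every element of `a` (i.e. `r_{|a|+1}[a,B]`). -/
def oneStepExt (a : Finset ℕ) (B : Set ℕ) : Set (Finset ℕ) :=
  {b | ∃ x ∈ B, (∀ y ∈ a, y < x) ∧ b = insert x a}

/-- `H ⊆ ℕ^[∞]` is a coideal: upward closed, satisfies A3 mod H and A4 mod H. -/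
def IsCoideal (H : Set (Set ℕ)) : Prop :=
  (∀ A ∈ H, A.Infinite) ∧
  (∀ A ∈ H, ∀ B : Set ℕ, B.Infinite → A ⊆ B → B ∈ H) ∧
  (∀ A ∈ H, ∀ a : Finset ℕ, ↑a ⊆ A →
    (∀ B ∈ H ∩ ENbhdN (depth A a) A, (ENbhd a B).Nonempty) ∧
    (∀ B ∈ H, B ⊆ A → (ENbhd a B).Nonempty →
      ∃ A' ∈ H ∩ ENbhdN (depth A a) A,
        (ENbhd a A').Nonempty ∧ ENbhd a A' ⊆ ENbhd a B)) ∧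
  (∀ A ∈ H, ∀ a : Finset ℕ, ↑a ⊆ A → ∀ O : Set (Finset ℕ),
    ∃ B ∈ H ∩ ENbhdN (depth A a) A,
      oneStepExt a B ⊆ O ∨ oneStepExt a B ∩ O = ∅)

/-- `D` is dense open in `S` (with respect to `⊆`). -/
def DenseOpenIn (D S : Set (Set ℕ)) : Prop :=
  (∀ A ∈ S, ∃ B ∈ D, B ⊆ A) ∧ (∀ A ∈ S, ∀ B ∈ D, A ⊆ B → A ∈ D)

/-- `C` diagonalizes the family `{A_a}`: for every finite `a ⊆ C`, `[a,C] ⊆ [a,A_a]`. -/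
def Diagonalizes (C : Set ℕ) (Afam : Finset ℕ → Set ℕ) : Prop :=
  ∀ a : Finset ℕ, ↑a ⊆ C → ENbhd a C ⊆ ENbhd a (Afam a)

/-- `H` is a semiselective coideal. -/
def Semiselective (H : Set (Set ℕ)) : Prop :=
  IsCoideal H ∧
  ∀ A ∈ H, ∀ Dfam : Finset ℕ → Set (Set ℕ),
    (∀ a : Finset ℕ, ↑a ⊆ A → DenseOpenIn (Dfam a) (H ∩ ENbhdN (depth A a) A)) →
    ∀ B ∈ H, B ⊆ A →
      ∃ C ∈ H, C ⊆ B ∧ ∃ Afam : Finset ℕ → Set ℕ,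
        (∀ a : Finset ℕ, ↑a ⊆ A → Afam a ∈ Dfam a) ∧ Diagonalizes C Afam

/-- `X` is `H`-Ramsey. -/
def HRamsey (H X : Set (Set ℕ)) : Prop :=
  ∀ a : Finset ℕ, ∀ A ∈ H, (ENbhd a A).Nonempty →
    ∃ B ∈ ENbhd a A ∩ H, ENbhd a B ⊆ X ∨ ENbhd a B ∩ X = ∅

/-- `X` is `H`-Ramsey null. -/
def HRamseyNull (H X : Set (Set ℕ)) : Prop :=
  ∀ a : Finset ℕ, ∀ A ∈ H, (ENbhd a A).Nonempty →
    ∃ B ∈ ENbhd a A ∩ H, ENbhd a B ∩ X = ∅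

/-- `X` is `H`-Baire. -/
def HBaire (H X : Set (Set ℕ)) : Prop :=
  ∀ a : Finset ℕ, ∀ A ∈ H, (ENbhd a A).Nonempty →
    ∃ (b : Finset ℕ) (B : Set ℕ), B ∈ H ∧ (ENbhd b B).Nonempty ∧
      ENbhd b B ⊆ ENbhd a A ∧ (ENbhd b B ⊆ X ∨ ENbhd b B ∩ X = ∅)

/-- `X` is `H`-meager. -/
def HMeager (H X : Set (Set ℕ)) : Prop :=
  ∀ a : Finset ℕ, ∀ A ∈ H, (ENbhd a A).Nonempty →
    ∃ (b : Finset ℕ) (B : Set ℕ), B ∈ H ∧ (ENbhd b B).Nonempty ∧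
      ENbhd b B ⊆ ENbhd a A ∧ ENbhd b B ∩ X = ∅

/-- `Exp(H) = {[n,A] : n ∈ ℕ, A ∈ H}`. -/
def ExpH (H : Set (Set ℕ)) : Set (Set (Set ℕ)) :=
  {S | ∃ (n : ℕ) (A : Set ℕ), A ∈ H ∧ S = ENbhdN n A}

/-- `X` is `Exp(H)`-nowhere dense. -/
def ExpNwd (H X : Set (Set ℕ)) : Prop :=
  ∀ S ∈ ExpH H, ∃ T ∈ ExpH H, T ⊆ S ∧ T ∩ X = ∅

/-- Combinatorial forcing: `A` accepts `a` (relative to `H` and `F`). -/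
def Accepts (H : Set (Set ℕ)) (F : Set (Finset ℕ)) (A : Set ℕ) (a : Finset ℕ) : Prop :=
  ∀ B ∈ H ∩ ENbhdN (depth A a) A, ∃ n : ℕ, ellR n B ∈ F

/-- Combinatorial forcing: `A` rejects `a` (relative to `H` and `F`). -/
def Rejects (H : Set (Set ℕ)) (F : Set (Finset ℕ)) (A : Set ℕ) (a : Finset ℕ) : Prop :=
  ∀ B ∈ H ∩ ENbhdN (depth A a) A, ¬ Accepts H F B a

/-- `A ≤* B` : `A` is an almost-reduction of `B`. -/
def AlmostRed (A B : Set ℕ) : Prop :=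
  ∃ a : Finset ℕ, ↑a ⊆ A ∧ ENbhd a A ⊆ ENbhd a B

/-- `D ⊆ H` is dense open in the preorder `(H, ≤*)`. -/
def DenseOpenStar (H D : Set (Set ℕ)) : Prop :=
  D ⊆ H ∧ (∀ A ∈ H, ∃ B ∈ D, AlmostRed B A) ∧
  (∀ A ∈ H, ∀ B ∈ D, AlmostRed A B → A ∈ D)

/-- The family `{A_a}` is filtered by `⊆` (indexed by the finite subsets of `A`). -/
def FilteredFamily (A : Set ℕ) (Afam : Finset ℕ → Set ℕ) : Prop :=
  ∀ a b : Finset ℕ, ↑a ⊆ A → ↑b ⊆ A →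
    ∃ c : Finset ℕ, ↑c ⊆ A ∧ Afam c ⊆ Afam a ∧ Afam c ⊆ Afam b

/-- `H` is a selective coideal. -/
def SelectiveCoideal (H : Set (Set ℕ)) : Prop :=
  IsCoideal H ∧
  ∀ A ∈ H, ∀ Afam : Finset ℕ → Set ℕ,
    (∀ a : Finset ℕ, ↑a ⊆ A → Afam a ∈ H ∧ Afam a ⊆ A ∧ (ENbhd a (Afam a)).Nonempty) →
    FilteredFamily A Afam →
    ∃ B ∈ H, B ⊆ A ∧ Diagonalizes B Afam

/-- `U ⊆ ℕ^[∞]` is a filter on `(ℕ^[∞], ⊆)`. -/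
def IsEFilter (U : Set (Set ℕ)) : Prop :=
  (∀ A ∈ U, A.Infinite) ∧
  (∀ A ∈ U, ∀ B : Set ℕ, B.Infinite → A ⊆ B → B ∈ U) ∧
  (∀ A ∈ U, ∀ B ∈ U, ∀ a : Finset ℕ,
    (ENbhd a A).Nonempty → (ENbhd a B).Nonempty →
      ∃ C ∈ U, C ∈ ENbhd a A ∩ ENbhd a B)

/-- `U` is an ultrafilter: a maximal filter satisfying A3 mod U. -/
def IsEUltrafilter (U : Set (Set ℕ)) : Prop :=
  IsEFilter U ∧
  (∀ U' : Set (Set ℕ), IsEFilter U' → U ⊆ U' → U' = U) ∧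
  (∀ A ∈ U, ∀ a : Finset ℕ, ↑a ⊆ A →
    (∀ B ∈ U ∩ ENbhdN (depth A a) A, (ENbhd a B).Nonempty) ∧
    (∀ B ∈ U, B ⊆ A → (ENbhd a B).Nonempty →
      ∃ A' ∈ U ∩ ENbhdN (depth A a) A,
        (ENbhd a A').Nonempty ∧ ENbhd a A' ⊆ ENbhd a B))

/-- `U` is a selective ultrafilter. -/
def SelectiveUltrafilter (U : Set (Set ℕ)) : Prop :=
  IsEUltrafilter U ∧
  ∀ A ∈ U, ∀ Afam : Finset ℕ → Set ℕ,
    (∀ a : Finset ℕ, ↑a ⊆ A → Afam a ∈ U ∧ Afam a ⊆ A ∧ (ENbhd a (Afam a)).Nonempty) →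
    FilteredFamily A Afam →
    ∃ B ∈ U, B ⊆ A ∧ Diagonalizes B Afam

/-- The conditions of the Mathias poset `M_U` : pairs `(a, A)` with `A ∈ U`, `[a,A] ≠ ∅`. -/
def MathiasCond (U : Set (Set ℕ)) : Set (Finset ℕ × Set ℕ) :=
  {p | p.2 ∈ U ∧ (ENbhd p.1 p.2).Nonempty}

/-- `D` is a dense open subset of the Mathias poset `M_U`
(ordered by `(a,A) ≤ (b,B) ↔ [a,A] ⊆ [b,B]`). -/
def MathiasDenseOpen (U : Set (Set ℕ)) (D : Set (Finset ℕ × Set ℕ)) : Prop :=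
  D ⊆ MathiasCond U ∧
  (∀ p ∈ MathiasCond U, ∃ q ∈ D, ENbhd q.1 q.2 ⊆ ENbhd p.1 p.2) ∧
  (∀ p ∈ MathiasCond U, ∀ q ∈ D, ENbhd p.1 p.2 ⊆ ENbhd q.1 q.2 → p ∈ D)

/-- `A` captures `(a, D)`. -/
def Captures (U : Set (Set ℕ)) (D : Set (Finset ℕ × Set ℕ))
    (a : Finset ℕ) (A : Set ℕ) : Prop :=
  A ∈ U ∧ (ENbhd a A).Nonempty ∧
  ∀ B ∈ ENbhd a A, ∃ m : ℕ, m > a.card ∧ (ellR m B, A) ∈ D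

namespace CaptureProof

open Set

/-! ### Basic lemmas about tails, initial segments, `ellR` -/

def tailSet (b : Finset ℕ) (X : Set ℕ) : Set ℕ := {x ∈ X | ∀ y ∈ b, y < x}

lemma tailSet_subset (b : Finset ℕ) (X : Set ℕ) : tailSet b X ⊆ X := fun _ hx => hx.1

lemma tailSet_infinite {X : Set ℕ} (hX : X.Infinite) (b : Finset ℕ) :
    (tailSet b X).Infinite := by
  refine Set.Infinite.mono (s := X \ Set.Iic (b.sup id)) ?_ (hX.diff (Set.finite_Iic _))
  intro x hx
  exact ⟨hx.1, fun y hy => lt_of_le_of_lt (Finset.le_sup (f := id) hy) (not_le.1 hx.2)⟩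

def extSet (b : Finset ℕ) (X : Set ℕ) : Set ℕ := ↑b ∪ tailSet b X

lemma extSet_mem_nbhd {b : Finset ℕ} {X : Set ℕ} (hX : X.Infinite) (hb : ↑b ⊆ X) :
    extSet b X ∈ ENbhd b X := by
  refine ⟨Set.Infinite.mono subset_union_right (tailSet_infinite hX b), ⟨subset_union_left, ?_⟩, ?_⟩
  · intro x hx hxb y hy
    rcases hx with hx | hx
    · exact absurd hx hxb
    · exact hx.2 y hy
  · rintro x (hx | hx)
    · exact hb hx
    · exact hx.1

lemma nbhd_nonempty {b : Finset ℕ} {X : Set ℕ} (hX : X.Infinite) (hb : ↑b ⊆ X) :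
    (ENbhd b X).Nonempty := ⟨extSet b X, extSet_mem_nbhd hX hb⟩

lemma nbhd_subset_dom {b : Finset ℕ} {X : Set ℕ} (h : (ENbhd b X).Nonempty) : ↑b ⊆ X := by
  obtain ⟨B, hB⟩ := h
  exact fun x hx => hB.2.2 (hB.2.1.1 hx)

lemma nbhd_mono_right {b : Finset ℕ} {X Y : Set ℕ} (h : X ⊆ Y) : ENbhd b X ⊆ ENbhd b Y :=
  fun B hB => ⟨hB.1, hB.2.1, hB.2.2.trans h⟩

/-- If `b ⊆ c` and every element of `c \ b` dominates `b`, then `[c,X] ⊆ [b,X]`. -/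
lemma nbhd_sub_of_fininit {b c : Finset ℕ} {X : Set ℕ} (hbc : b ⊆ c)
    (hdom : ∀ x ∈ c, x ∉ b → ∀ y ∈ b, y < x) : ENbhd c X ⊆ ENbhd b X := by
  intro B hB
  refine ⟨hB.1, ⟨fun x hx => hB.2.1.1 (hbc hx), ?_⟩, hB.2.2⟩
  intro x hxB hxb y hy
  by_cases hxc : x ∈ c
  · exact hdom x hxc hxb y hy
  · exact hB.2.1.2 x hxB hxc y (hbc hy)

/-- Two initial segments of the same set are comparable. -/
lemma initseg_comparable {b c : Finset ℕ} {B : Set ℕ}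
    (hb : IsInitSeg b B) (hc : IsInitSeg c B) : b ⊆ c ∨ c ⊆ b := by
  by_cases h : b ⊆ c
  · exact Or.inl h
  · right
    obtain ⟨x, hxb, hxc⟩ := Finset.not_subset.1 h
    intro z hz
    by_contra hzb
    have h1 : x < z := hb.2 z (hc.1 hz) hzb x hxb
    have h2 : z < x := hc.2 x (hb.1 hxb) hxc z hz
    omega

lemma initseg_subset_of_card_le {b c : Finset ℕ} {B : Set ℕ}
    (hb : IsInitSeg b B) (hc : IsInitSeg c B) (h : b.card ≤ c.card) : b ⊆ c := by
  rcases initseg_comparable hb hc with h' | h'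
  · exact h'
  · exact (Finset.eq_of_subset_of_card_le h' h).ge

lemma ellR_subset {B : Set ℕ} (hB : B.Infinite) (m : ℕ) : ↑(ellR m B) ⊆ B := by
  intro x hx
  simp only [ellR, Finset.coe_image, Set.mem_image] at hx
  obtain ⟨k, _, rfl⟩ := hx
  exact Nat.nth_mem_of_infinite hB k

lemma ellR_card {B : Set ℕ} (hB : B.Infinite) (m : ℕ) : (ellR m B).card = m := by
  rw [ellR]
  exact (Finset.card_image_of_injOn ((Nat.nth_strictMono hB).injective.injOn)).trans
    (Finset.card_range m)

lemma ellR_mono {B : Set ℕ} {m n : ℕ} (h : m ≤ n) : ellR m B ⊆ ellR n B :=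
  Finset.image_subset_image (Finset.range_subset_range.2 h)

lemma ellR_initSeg {B : Set ℕ} (hB : B.Infinite) (m : ℕ) : IsInitSeg (ellR m B) B := by
  classical
  refine ⟨ellR_subset hB m, ?_⟩
  intro x hxB hx y hy
  simp only [ellR, Finset.mem_image, Finset.mem_range] at hx hy
  obtain ⟨k, hk, rfl⟩ := hy
  have hcx : Nat.nth (· ∈ B) (Nat.count (· ∈ B) x) = x := Nat.nth_count hxB
  have hge : m ≤ Nat.count (· ∈ B) x := by
    by_contra hlt
    exact hx ⟨_, not_le.1 hlt, hcx⟩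
  calc Nat.nth (· ∈ B) k < Nat.nth (· ∈ B) (Nat.count (· ∈ B) x) :=
        Nat.nth_strictMono hB (lt_of_lt_of_le hk hge)
    _ = x := hcx

lemma mem_nbhd_ellR {B : Set ℕ} (hB : B.Infinite) (m : ℕ) : B ∈ ENbhd (ellR m B) B :=
  ⟨hB, ellR_initSeg hB m, subset_rfl⟩

lemma ellR_eq_of_initseg {b : Finset ℕ} {B : Set ℕ} (hB : B.Infinite)
    (h : IsInitSeg b B) : ellR b.card B = b := by
  rcases initseg_comparable (ellR_initSeg hB b.card) h with h' | h'
  · exact Finset.eq_of_subset_of_card_le h' (ellR_card hB b.card).ge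
  · exact (Finset.eq_of_subset_of_card_le h' (ellR_card hB b.card).le).symm

lemma ellR_succ {B : Set ℕ} (hB : B.Infinite) (n : ℕ) :
    ellR (n + 1) B = insert (Nat.nth (· ∈ B) n) (ellR n B) ∧
    Nat.nth (· ∈ B) n ∉ ellR n B ∧ (∀ y ∈ ellR n B, y < Nat.nth (· ∈ B) n) := by
  have hmem : ∀ y ∈ ellR n B, y < Nat.nth (· ∈ B) n := by
    intro y hy
    simp only [ellR, Finset.mem_image, Finset.mem_range] at hy
    obtain ⟨k, hk, rfl⟩ := hy
    exact Nat.nth_strictMono hB hk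
  have hnot : Nat.nth (· ∈ B) n ∉ ellR n B := fun h => lt_irrefl _ (hmem _ h)
  refine ⟨?_, hnot, hmem⟩
  rw [ellR, Finset.range_add_one, Finset.image_insert]
  rfl

lemma ellR_nth_mem_compl {B : Set ℕ} (hB : B.Infinite) (n : ℕ) :
    Nat.nth (· ∈ B) n ∈ B := Nat.nth_mem_of_infinite hB n

end CaptureProof
namespace CaptureProof

variable {U : Set (Set ℕ)}

lemma mem_infinite (hU : SelectiveUltrafilter U) {A : Set ℕ} (hA : A ∈ U) : A.Infinite :=
  hU.1.1.1 A hA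

lemma upward (hU : SelectiveUltrafilter U) {A B : Set ℕ} (hA : A ∈ U) (hAB : A ⊆ B) : B ∈ U :=
  hU.1.1.2.1 A hA B ((mem_infinite hU hA).mono hAB) hAB

lemma initseg_empty (X : Set ℕ) : IsInitSeg ∅ X := by
  constructor <;> simp

lemma meet (hU : SelectiveUltrafilter U) {A B : Set ℕ} (hA : A ∈ U) (hB : B ∈ U) :
    ∃ C ∈ U, C ⊆ A ∧ C ⊆ B := by
  have hAne : (ENbhd (∅ : Finset ℕ) A).Nonempty :=
    ⟨A, mem_infinite hU hA, initseg_empty A, subset_rfl⟩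
  have hBne : (ENbhd (∅ : Finset ℕ) B).Nonempty :=
    ⟨B, mem_infinite hU hB, initseg_empty B, subset_rfl⟩
  obtain ⟨C, hCU, hCA, hCB⟩ := hU.1.1.2.2 A hA B hB ∅ hAne hBne
  exact ⟨C, hCU, hCA.2.2, hCB.2.2⟩

lemma f4aux (hU : SelectiveUltrafilter U) (S : Set ℕ) (hne : ∃ B, B ∈ U)
    (h : ∀ C ∈ U, (C ∩ S).Infinite) : ∃ C ∈ U, C ⊆ S := by
  set U' : Set (Set ℕ) := {X : Set ℕ | X.Infinite ∧ ∃ C, C ∈ U ∧ ∃ F : Finset ℕ, (C ∩ S) \ (↑F : Set ℕ) ⊆ X} with hU'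
  have hUsub : U ⊆ U' := by
    intro A hA
    exact ⟨mem_infinite hU hA, A, hA, ∅, by simp [Set.diff_subset.trans Set.inter_subset_left]⟩
  have hfil : IsEFilter U' := by
    refine ⟨fun A hA => hA.1, fun A hA B hBinf hAB => ⟨hBinf, ?_⟩, ?_⟩
    · obtain ⟨_, C, hCU, F, hF⟩ := hA
      exact ⟨C, hCU, F, hF.trans hAB⟩
    · rintro X ⟨hXinf, CX, hCXU, FX, hFX⟩ Y ⟨hYinf, CY, hCYU, FY, hFY⟩ b hXne hYne
      obtain ⟨C, hCU, hC1, hC2⟩ := meet hU hCXU hCYU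
      set T : Set ℕ := tailSet b (C ∩ S) \ ↑(FX ∪ FY) with hT
      have hTinf : T.Infinite := (tailSet_infinite (h C hCU) b).diff (Finset.finite_toSet _)
      set Z : Set ℕ := ↑b ∪ T with hZ
      have hZinf : Z.Infinite := hTinf.mono Set.subset_union_right
      have hZseg : IsInitSeg b Z := by
        refine ⟨Set.subset_union_left, ?_⟩
        rintro x (hx | hx) hxb y hy
        · exact absurd hx hxb
        · exact hx.1.2 y hy
      have hZX : Z ∈ ENbhd b X := by
        refine ⟨hZinf, hZseg, ?_⟩
        rintro x (hx | hx)
        · exact nbhd_subset_dom hXne hx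
        · refine hFX ⟨⟨hC1 hx.1.1.1, hx.1.1.2⟩, fun hmem => hx.2 ?_⟩
          exact Finset.mem_coe.2 (Finset.mem_union_left _ (Finset.mem_coe.1 hmem))
      have hZY : Z ∈ ENbhd b Y := by
        refine ⟨hZinf, hZseg, ?_⟩
        rintro x (hx | hx)
        · exact nbhd_subset_dom hYne hx
        · refine hFY ⟨⟨hC2 hx.1.1.1, hx.1.1.2⟩, fun hmem => hx.2 ?_⟩
          exact Finset.mem_coe.2 (Finset.mem_union_right _ (Finset.mem_coe.1 hmem))
      refine ⟨Z, ⟨hZinf, C, hCU, FX ∪ FY ∪ Finset.range (b.sup id + 1), ?_⟩, hZX, hZY⟩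
      rintro x ⟨hxCS, hxF⟩
      have hx1 : x ∉ (FX ∪ FY : Finset ℕ) := fun hc => hxF (by simp at hc ⊢; tauto)
      have hx2 : x ∉ Finset.range (b.sup id + 1) := fun hc => hxF (by simp at hc ⊢; tauto)
      have hxgt : ∀ y ∈ b, y < x := by
        intro y hy
        have h5 := Finset.le_sup (f := id) hy
        simp only [Finset.mem_range, not_lt] at hx2
        simp only [id_eq] at h5
        omega
      exact Or.inr ⟨⟨hxCS, hxgt⟩, hx1⟩
  have hEq : U' = U := hU.1.2.1 U' hfil hUsub
  obtain ⟨B₀, hB₀⟩ := hne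
  have : B₀ ∩ S ∈ U' := ⟨h B₀ hB₀, B₀, hB₀, ∅, by simp⟩
  rw [hEq] at this
  exact ⟨B₀ ∩ S, this, Set.inter_subset_right⟩

lemma f4 (hU : SelectiveUltrafilter U) (hne : ∃ B, B ∈ U) (S : Set ℕ) :
    (∃ C ∈ U, C ⊆ S) ∨ (∃ C ∈ U, C ⊆ Sᶜ) := by
  by_cases h : ∀ C ∈ U, (C ∩ S).Infinite
  · exact Or.inl (f4aux hU S hne h)
  · right
    push_neg at h
    obtain ⟨C₁, hC₁U, hC₁fin⟩ := h
    refine f4aux hU Sᶜ hne ?_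
    intro C hC
    obtain ⟨C₂, hC₂U, hC₂a, hC₂b⟩ := meet hU hC hC₁U
    have hfin : (C₂ ∩ S).Finite := hC₁fin.subset (Set.inter_subset_inter_left S hC₂b)
    refine Set.Infinite.mono (s := C₂ \ (C₂ ∩ S)) ?_ ((mem_infinite hU hC₂U).diff hfin)
    rintro x ⟨hx1, hx2⟩
    exact ⟨hC₂a hx1, fun hxS => hx2 ⟨hx1, hxS⟩⟩

lemma tail_mem (hU : SelectiveUltrafilter U) (hne : ∃ B, B ∈ U) {X : Set ℕ} (hX : X ∈ U)
    (b : Finset ℕ) : tailSet b X ∈ U := by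
  rcases f4 hU hne {x | ∀ y ∈ b, y < x} with ⟨C, hCU, hCS⟩ | ⟨C, hCU, hCS⟩
  · obtain ⟨C', hC'U, h1, h2⟩ := meet hU hCU hX
    refine upward hU hC'U ?_
    exact fun x hx => ⟨h2 hx, hCS (h1 hx)⟩
  · exfalso
    have hsub : C ⊆ Set.Iic (b.sup id) := by
      intro x hx
      have := hCS hx
      simp only [Set.mem_compl_iff, Set.mem_setOf_eq, not_forall, not_lt] at this
      obtain ⟨y, hy, hyx⟩ := this
      exact le_trans hyx (Finset.le_sup (f := id) hy)
    exact (mem_infinite hU hCU) (Set.Finite.subset (Set.finite_Iic _) hsub)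

lemma extSet_self_mem {b : Finset ℕ} {X : Set ℕ} (hX : X.Infinite) :
    extSet b X ∈ ENbhd b (extSet b X) := by
  refine ⟨Set.Infinite.mono Set.subset_union_right (tailSet_infinite hX b),
    ⟨Set.subset_union_left, ?_⟩, subset_rfl⟩
  rintro x (hx | hx) hxb y hy
  · exact absurd hx hxb
  · exact hx.2 y hy

/-- Diagonalization workhorse: for every `U`-indexed family `g` there is `B ∈ U`, `B ⊆ A`,
such that every element of `B` dominating a finite `b ⊆ B` lies in `g b`. -/
lemma diag (hU : SelectiveUltrafilter U) (hne : ∃ B, B ∈ U) {A : Set ℕ} (hA : A ∈ U)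
    (g : Finset ℕ → Set ℕ) (hg : ∀ b, g b ∈ U) :
    ∃ B ∈ U, B ⊆ A ∧ ∀ b : Finset ℕ, ↑b ⊆ B → ∀ x ∈ B, (∀ y ∈ b, y < x) → x ∈ g b := by
  classical
  set h : ℕ → Set ℕ := fun n => (Encodable.decode (α := Finset ℕ) n).elim A g with hdef
  have hh : ∀ n, h n ∈ U := by
    intro n
    rcases hd : Encodable.decode (α := Finset ℕ) n with _ | b <;> simp [hdef, hd, hA, hg]
  have key : ∀ X ∈ U, ∀ n : ℕ, ∃ C ∈ U, C ⊆ X ∧ C ⊆ h n := by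
    intro X hX n
    obtain ⟨C, hC, h1, h2⟩ := meet hU hX (hh n)
    exact ⟨C, hC, h1, h2⟩
  choose! F hFU hF1 hF2 using key
  set Y : ℕ → Set ℕ := fun n => Nat.rec A (fun n Yn => F Yn n) n with hYdef
  have hYU : ∀ n, Y n ∈ U := by
    intro n
    induction n with
    | zero => exact hA
    | succ n ih => exact hFU _ ih n
  have hYstep1 : ∀ n, Y (n + 1) ⊆ Y n := fun n => hF1 _ (hYU n) n
  have hYstep2 : ∀ n, Y (n + 1) ⊆ h n := fun n => hF2 _ (hYU n) n
  have hYmono : ∀ m n, m ≤ n → Y n ⊆ Y m := by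
    intro m n hmn
    induction n with
    | zero => have : m = 0 := by omega
              subst this; exact subset_rfl
    | succ n ih =>
      rcases Nat.lt_or_ge m (n + 1) with h' | h'
      · exact (hYstep1 n).trans (ih (by omega))
      · have : m = n + 1 := by omega
        subst this; exact subset_rfl
  have hYsubA : ∀ n, Y n ⊆ A := fun n => hYmono 0 n (Nat.zero_le n)
  set e : Finset ℕ → ℕ := fun b => Encodable.encode b with he
  have hYe : ∀ b : Finset ℕ, Y (e b + 1) ⊆ g b := by
    intro b
    refine (hYstep2 (e b)).trans ?_
    have hd : Encodable.decode (α := Finset ℕ) (e b) = some b := Encodable.encodek b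
    simp [hdef, hd]
  set Afam : Finset ℕ → Set ℕ := fun b => extSet b (Y (e b + 1)) with hAfam
  have hAfamtail : ∀ b, tailSet b (Y (e b + 1)) ∈ U := fun b => tail_mem hU hne (hYU (e b + 1)) b
  have hAfamU : ∀ b, Afam b ∈ U := fun b =>
    upward hU (hAfamtail b) Set.subset_union_right
  have hyp : ∀ b : Finset ℕ, ↑b ⊆ A →
      Afam b ∈ U ∧ Afam b ⊆ A ∧ (ENbhd b (Afam b)).Nonempty := by
    intro b hb
    refine ⟨hAfamU b, ?_, ⟨Afam b, extSet_self_mem (mem_infinite hU (hYU (e b + 1)))⟩⟩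
    rintro x (hx | hx)
    · exact hb hx
    · exact hYsubA (e b + 1) hx.1
  have hfil : FilteredFamily A Afam := by
    intro b c hb hc
    set M := max (e b) (e c) + 1 with hM
    have hinj : Function.Injective (fun x : ℕ => e ({x} : Finset ℕ)) := by
      intro x y hxy
      have := Encodable.encode_injective (α := Finset ℕ) hxy
      exact Finset.singleton_injective this
    have hfin : {x : ℕ | e ({x} : Finset ℕ) < M}.Finite :=
      Set.Finite.preimage hinj.injOn (Set.finite_Iio M)
    have hYM : (Y M).Infinite := mem_infinite hU (hYU M)
    obtain ⟨x, hxY, hxbad⟩ :=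
      ((hYM.diff (hfin.union (Set.finite_Iic ((b ∪ c).sup id)))).nonempty)
    have hxM : M ≤ e ({x} : Finset ℕ) := by
      by_contra hc'
      exact hxbad (Or.inl (not_le.1 hc'))
    have hxgt : ∀ y ∈ b ∪ c, y < x := by
      intro y hy
      have h1 : ¬ x ≤ (b ∪ c).sup id := fun hc' => hxbad (Or.inr hc')
      have h5 := Finset.le_sup (f := id) hy
      simp only [id_eq] at h5
      omega
    have hsub : ∀ d : Finset ℕ, e d < M → (∀ y ∈ d, y ∈ b ∪ c) → Afam {x} ⊆ Afam d := by
      intro d hd hdbc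
      have hxd : ∀ y ∈ d, y < x := fun y hy => hxgt y (hdbc y hy)
      have hYsub : Y (e ({x} : Finset ℕ) + 1) ⊆ Y (e d + 1) :=
        hYmono (e d + 1) (e ({x} : Finset ℕ) + 1) (by omega)
      have hYsub2 : Y M ⊆ Y (e d + 1) := hYmono (e d + 1) M (by omega)
      rintro z (hz | hz)
      · simp only [Finset.coe_singleton, Set.mem_singleton_iff] at hz
        subst hz
        exact Or.inr ⟨hYsub2 hxY, hxd⟩
      · refine Or.inr ⟨hYsub hz.1, fun y hy => lt_trans (hxd y hy) ?_⟩
        exact hz.2 x (Finset.mem_singleton_self x)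
    refine ⟨{x}, ?_, ?_, ?_⟩
    · simp only [Finset.coe_singleton, Set.singleton_subset_iff]
      exact hYsubA M hxY
    · exact hsub b (by omega) (fun y hy => Finset.mem_union_left _ hy)
    · exact hsub c (by omega) (fun y hy => Finset.mem_union_right _ hy)
  obtain ⟨B, hBU, hBA, hdiag⟩ := hU.2 A hA Afam hyp hfil
  refine ⟨B, hBU, hBA, ?_⟩
  intro b hb x hx hgt
  have hBinf := mem_infinite hU hBU
  have hW := hdiag b hb (extSet_mem_nbhd hBinf hb)
  have hxA : x ∈ Afam b := hW.2.2 (Or.inr ⟨hx, hgt⟩)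
  rcases hxA with hmem | hmem
  · exact absurd (hgt x hmem) (lt_irrefl x)
  · exact hYe b hmem.1

end CaptureProof
namespace CaptureProof

variable {U : Set (Set ℕ)} {D : Set (Finset ℕ × Set ℕ)}

/-- `b` is good: some condition `(b, X)` lies in `D`. -/
def EGood (U : Set (Set ℕ)) (D : Set (Finset ℕ × Set ℕ)) (b : Finset ℕ) : Prop :=
  ∃ X ∈ U, (b, X) ∈ D

/-- `X` accepts `b`: every `B ∈ [b,X]` has a good initial segment longer than `b`. -/
def EAcc (U : Set (Set ℕ)) (D : Set (Finset ℕ × Set ℕ)) (X : Set ℕ) (b : Finset ℕ) : Prop :=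
  ∀ B ∈ ENbhd b X, ∃ m, m > b.card ∧ EGood U D (ellR m B)

/-- `X` rejects `b`: no `Z ∈ U` below `X` accepts `b`. -/
def ERej (U : Set (Set ℕ)) (D : Set (Finset ℕ × Set ℕ)) (X : Set ℕ) (b : Finset ℕ) : Prop :=
  ∀ Z ∈ U, Z ⊆ X → (ENbhd b Z).Nonempty → ¬ EAcc U D Z b

lemma good_acc (hD : MathiasDenseOpen U D) {b : Finset ℕ} {X : Set ℕ}
    (hbX : (b, X) ∈ D) : EAcc U D X b := by
  intro B hB
  have hXU := hD.1 hbX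
  have hBinf : B.Infinite := hB.1
  refine ⟨b.card + 1, Nat.lt_succ_self _, X, hXU.1, ?_⟩
  refine hD.2.2 (ellR (b.card + 1) B, X)
    ⟨hXU.1, ⟨B, hBinf, ellR_initSeg hBinf _, hB.2.2⟩⟩ (b, X) hbX ?_
  have hbB : IsInitSeg b B := hB.2.1
  have hsub : b ⊆ ellR (b.card + 1) B := by
    have h2 : ellR b.card B ⊆ ellR (b.card + 1) B := ellR_mono (Nat.le_succ _)
    rwa [ellR_eq_of_initseg hBinf hbB] at h2
  refine nbhd_sub_of_fininit hsub ?_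
  intro x hx hxb y hy
  exact hbB.2 x (ellR_subset hBinf _ (Finset.mem_coe.2 hx)) hxb y hy

lemma good_not_rej (hU : SelectiveUltrafilter U) (hD : MathiasDenseOpen U D)
    {b : Finset ℕ} {X : Set ℕ} (hXU : X ∈ U) (hXne : (ENbhd b X).Nonempty)
    (hg : EGood U D b) : ¬ ERej U D X b := by
  intro hR
  obtain ⟨Xg, hXgU, hXgD⟩ := hg
  have hXgne : (ENbhd b Xg).Nonempty := (hD.1 hXgD).2
  obtain ⟨C, hCU, hCX, hCXg⟩ := hU.1.1.2.2 X hXU Xg hXgU b hXne hXgne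
  have hCinf : C.Infinite := hCX.1
  have hCne : (ENbhd b C).Nonempty := ⟨C, hCinf, hCX.2.1, subset_rfl⟩
  have hCD : (b, C) ∈ D :=
    hD.2.2 (b, C) ⟨hCU, hCne⟩ (b, Xg) hXgD (nbhd_mono_right hCXg.2.2)
  exact hR C hCU hCX.2.2 hCne (good_acc hD hCD)

lemma rejstep (hU : SelectiveUltrafilter U) (hD : MathiasDenseOpen U D)
    (hne : ∃ B, B ∈ U) {X : Set ℕ} {b : Finset ℕ} (hXU : X ∈ U)
    (hXne : (ENbhd b X).Nonempty) (hR : ERej U D X b) :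
    ∃ C ∈ U, C ⊆ X ∧ (∀ x ∈ C, ∀ y ∈ b, y < x) ∧
      ∀ x ∈ C, ERej U D X (insert x b) := by
  classical
  set S : Set ℕ := {x | ∃ Z, Z ∈ U ∧ Z ⊆ X ∧ (ENbhd (insert x b) Z).Nonempty ∧
    EAcc U D Z (insert x b)} with hS
  have hbX : ↑b ⊆ X := nbhd_subset_dom hXne
  rcases f4 hU hne S with ⟨C₀, hC₀U, hC₀S⟩ | ⟨C₀, hC₀U, hC₀S⟩
  · exfalso
    obtain ⟨C₁, hC₁U, hC₁a, hC₁b⟩ := meet hU hC₀U hXU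
    have hC₂U : tailSet b C₁ ∈ U := tail_mem hU hne hC₁U b
    set C₂ := tailSet b C₁ with hC₂
    have hC₂X : C₂ ⊆ X := (tailSet_subset b C₁).trans hC₁b
    have hC₂S : C₂ ⊆ S := fun x hx => hC₀S (hC₁a (tailSet_subset b C₁ hx))
    have hZch : ∀ x : ℕ, ∃ Z, Z ∈ U ∧ (x ∈ S →
        Z ⊆ X ∧ (ENbhd (insert x b) Z).Nonempty ∧ EAcc U D Z (insert x b)) := by
      intro x
      by_cases hx : x ∈ S
      · obtain ⟨Z, h1, h2, h3, h4⟩ := hx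
        exact ⟨Z, h1, fun _ => ⟨h2, h3, h4⟩⟩
      · exact ⟨X, hXU, fun h => absurd h hx⟩
    choose Z hZU hZP using hZch
    set g : Finset ℕ → Set ℕ :=
      fun c => if h : c.card = 1 then Z (c.min' (Finset.card_pos.1 (by omega))) else X with hg
    have hgU : ∀ c, g c ∈ U := by
      intro c
      by_cases h : c.card = 1 <;> simp [hg, h, hZU, hXU]
    obtain ⟨Y, hYU, hYC₂, hYd⟩ := diag hU hne hC₂U g hgU
    have hgx : ∀ x : ℕ, g {x} = Z x := by
      intro x
      have h1 : ({x} : Finset ℕ).card = 1 := Finset.card_singleton x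
      simp [hg, h1]
    set V : Set ℕ := ↑b ∪ Y with hV
    have hYinf : Y.Infinite := mem_infinite hU hYU
    have hVU : V ∈ U := upward hU hYU Set.subset_union_right
    have hVX : V ⊆ X := by
      rintro z (hz | hz)
      exacts [hbX hz, hC₂X (hYC₂ hz)]
    have hYgt : ∀ x ∈ Y, ∀ y ∈ b, y < x := fun x hx => (hYC₂ hx).2
    have hVseg : IsInitSeg b V := by
      refine ⟨Set.subset_union_left, ?_⟩
      rintro z (hz | hz) hzb y hy
      exacts [absurd hz hzb, hYgt z hz y hy]
    have hVne : (ENbhd b V).Nonempty :=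
      ⟨V, hYinf.mono Set.subset_union_right, hVseg, subset_rfl⟩
    refine hR V hVU hVX hVne ?_
    intro B hB
    have hBinf : B.Infinite := hB.1
    obtain ⟨hins, hxnot, hxgt⟩ := ellR_succ hBinf b.card
    set x := Nat.nth (· ∈ B) b.card with hx
    have hbe : ellR b.card B = b := ellR_eq_of_initseg hBinf hB.2.1
    rw [hbe] at hins hxnot hxgt
    have hxB : x ∈ B := Nat.nth_mem_of_infinite hBinf b.card
    have hxY : x ∈ Y := by
      rcases hB.2.2 hxB with h | h
      · exact absurd (Finset.mem_coe.1 h) hxnot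
      · exact h
    have hxS : x ∈ S := hC₂S (hYC₂ hxY)
    obtain ⟨hZX, hZne, hZacc⟩ := hZP x hxS
    have hsegins : IsInitSeg (insert x b) B := by
      have h := ellR_initSeg hBinf (b.card + 1)
      rwa [hins] at h
    have hBZ : B ∈ ENbhd (insert x b) (Z x) := by
      refine ⟨hBinf, hsegins, ?_⟩
      intro z hzB
      by_cases hzi : z ∈ (insert x b : Finset ℕ)
      · exact nbhd_subset_dom hZne (Finset.mem_coe.2 hzi)
      · have hzY : z ∈ Y := by
          rcases hB.2.2 hzB with h | h
          · exact absurd (Finset.mem_coe.1 h) (fun hzb => hzi (Finset.mem_insert_of_mem hzb))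
          · exact h
        have hzx : x < z := hsegins.2 z hzB hzi x (Finset.mem_insert_self x b)
        have h := hYd {x} (by simpa using hxY) z hzY (by simpa using hzx)
        rwa [hgx x] at h
    obtain ⟨m, hm, hmg⟩ := hZacc B hBZ
    refine ⟨m, ?_, hmg⟩
    have hcard : (insert x b).card = b.card + 1 := Finset.card_insert_of_notMem hxnot
    omega
  · obtain ⟨C₁, hC₁U, hC₁a, hC₁b⟩ := meet hU hC₀U hXU
    refine ⟨tailSet b C₁, tail_mem hU hne hC₁U b, (tailSet_subset b C₁).trans hC₁b,
      fun x hx => hx.2, ?_⟩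
    intro x hx Z hZU hZX hZne hZacc
    exact hC₀S (hC₁a (tailSet_subset b C₁ hx)) ⟨Z, hZU, hZX, hZne, hZacc⟩

end CaptureProof
/-- Capture lemma: for a selective ultrafilter `U` and a dense open `D ⊆ M_U`,
every finite `a` with `[a,B] ≠ ∅` for some `B ∈ U` is captured by some `A ∈ U`. -/
theorem capture_lemma (U : Set (Set ℕ)) (hU : SelectiveUltrafilter U)
    (D : Set (Finset ℕ × Set ℕ)) (hD : MathiasDenseOpen U D)
    (a : Finset ℕ) (ha : ∃ B ∈ U, (ENbhd a B).Nonempty) :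
    ∃ A : Set ℕ, Captures U D a A := by
  classical
  open CaptureProof in
  obtain ⟨B₀, hB₀U, hB₀ne⟩ := ha
  have hne : ∃ B, B ∈ U := ⟨B₀, hB₀U⟩
  have haB₀ : ↑a ⊆ B₀ := nbhd_subset_dom hB₀ne
  by_cases hrej : ERej U D B₀ a
  · -- rejection leads to a contradiction by fusion + density
    exfalso
    have step : ∀ b : Finset ℕ, ∃ C, C ∈ U ∧ ∀ x ∈ C,
        (ENbhd b B₀).Nonempty → ERej U D B₀ b → ERej U D B₀ (insert x b) := by
      intro b
      by_cases h : (ENbhd b B₀).Nonempty ∧ ERej U D B₀ b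
      · obtain ⟨C, hCU, _, _, hCrej⟩ := rejstep hU hD hne hB₀U h.1 h.2
        exact ⟨C, hCU, fun x hx _ _ => hCrej x hx⟩
      · exact ⟨B₀, hB₀U, fun x _ h1 h2 => absurd ⟨h1, h2⟩ h⟩
    choose gC hgCU hgCstep using step
    obtain ⟨Y, hYU, hYB₀, hYd⟩ := diag hU hne hB₀U (fun s => gC (a ∪ s)) (fun s => hgCU _)
    set A' : Set ℕ := ↑a ∪ tailSet a Y with hA'
    have htailU : tailSet a Y ∈ U := tail_mem hU hne hYU a
    have hA'U : A' ∈ U := upward hU htailU Set.subset_union_right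
    have hA'inf : A'.Infinite := mem_infinite hU hA'U
    have hA'seg : IsInitSeg a A' := by
      refine ⟨Set.subset_union_left, ?_⟩
      rintro z (hz | hz) hzb y hy
      exacts [absurd hz hzb, hz.2 y hy]
    have hA'ne : (ENbhd a A').Nonempty := ⟨A', hA'inf, hA'seg, subset_rfl⟩
    have hA'B₀ : A' ⊆ B₀ := by
      rintro z (hz | hz)
      exacts [haB₀ hz, hYB₀ (tailSet_subset a Y hz)]
    obtain ⟨q, hqD, hqsub⟩ := hD.2.1 (a, A') ⟨hA'U, hA'ne⟩
    obtain ⟨c, W⟩ := q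
    have hqM := hD.1 hqD
    obtain ⟨B, hBcW⟩ := hqM.2
    have hBA' : B ∈ ENbhd a A' := hqsub hBcW
    have hBinf : B.Infinite := hBA'.1
    have haB : IsInitSeg a B := hBA'.2.1
    have hae : ellR a.card B = a := ellR_eq_of_initseg hBinf haB
    have hBtail : ∀ z ∈ B, z ∉ a → z ∈ tailSet a Y := by
      intro z hz hza
      rcases hBA'.2.2 hz with h | h
      · exact absurd (Finset.mem_coe.1 h) hza
      · exact h
    have hind : ∀ k, ERej U D B₀ (ellR (a.card + k) B) ∧
        (ENbhd (ellR (a.card + k) B) B₀).Nonempty := by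
      intro k
      induction k with
      | zero =>
        simp only [Nat.add_zero, hae]
        exact ⟨hrej, hB₀ne⟩
      | succ k ih =>
        set n := a.card + k with hn
        obtain ⟨hins, hxnot, hxgt⟩ := ellR_succ hBinf n
        set x := Nat.nth (· ∈ B) n with hxdef
        have hxB : x ∈ B := Nat.nth_mem_of_infinite hBinf n
        have hsubB : ↑(ellR n B) ⊆ B := ellR_subset hBinf n
        have hasub : a ⊆ ellR n B := by
          have h2 : ellR a.card B ⊆ ellR n B := ellR_mono (Nat.le_add_right _ _)
          rwa [hae] at h2
        set s : Finset ℕ := ellR n B \ a with hs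
        have hunion : a ∪ s = ellR n B := Finset.union_sdiff_of_subset hasub
        have hsY : ↑s ⊆ Y := by
          intro z hz
          have hz' := Finset.mem_sdiff.1 (Finset.mem_coe.1 hz)
          exact tailSet_subset a Y (hBtail z (hsubB (Finset.mem_coe.2 hz'.1)) hz'.2)
        have hxa : x ∉ a := fun h => hxnot (hasub h)
        have hxY : x ∈ Y := tailSet_subset a Y (hBtail x hxB hxa)
        have hxgt' : ∀ y ∈ s, y < x := fun y hy => hxgt y (Finset.mem_sdiff.1 hy).1
        have hxg : x ∈ gC (a ∪ s) := hYd s hsY x hxY hxgt'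
        rw [hunion] at hxg
        have hrej' : ERej U D B₀ (insert x (ellR n B)) := hgCstep _ x hxg ih.2 ih.1
        have hsubB₀ : ↑(ellR (n + 1) B) ⊆ B₀ :=
          fun z hz => hA'B₀ (hBA'.2.2 (ellR_subset hBinf _ hz))
        have hne' : (ENbhd (ellR (n + 1) B) B₀).Nonempty :=
          nbhd_nonempty (mem_infinite hU hB₀U) hsubB₀
        have hrej'' : ERej U D B₀ (ellR (n + 1) B) := by rw [hins]; exact hrej'
        exact ⟨hrej'', hne'⟩
    obtain ⟨hrejm, hnem⟩ := hind c.card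
    have hcB : IsInitSeg c B := hBcW.2.1
    have hcb' : c ⊆ ellR (a.card + c.card) B := by
      have h2 : ellR c.card B ⊆ ellR (a.card + c.card) B := ellR_mono (Nat.le_add_left _ _)
      rwa [ellR_eq_of_initseg hBinf hcB] at h2
    have hb'sub : ENbhd (ellR (a.card + c.card) B) W ⊆ ENbhd c W := by
      refine nbhd_sub_of_fininit hcb' ?_
      intro z hz hzc y hy
      exact hcB.2 z (ellR_subset hBinf _ (Finset.mem_coe.2 hz)) hzc y hy
    have hb'W : (ellR (a.card + c.card) B, W) ∈ D :=
      hD.2.2 (ellR (a.card + c.card) B, W)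
        ⟨hqM.1, ⟨B, hBinf, ellR_initSeg hBinf _, hBcW.2.2⟩⟩ (c, W) hqD hb'sub
    exact good_not_rej hU hD hB₀U hnem ⟨W, hqM.1, hb'W⟩ hrejm
  · -- acceptance: build the capturing set
    simp only [ERej, not_forall] at hrej
    obtain ⟨X₁, hX₁U, hX₁B₀, hX₁ne, hX₁acc⟩ := hrej
    rw [not_not] at hX₁acc
    have hWch : ∀ b : Finset ℕ, ∃ Xg, Xg ∈ U ∧ (EGood U D b → (b, Xg) ∈ D) := by
      intro b
      by_cases h : EGood U D b
      · obtain ⟨Xg, h1, h2⟩ := h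
        exact ⟨Xg, h1, fun _ => h2⟩
      · exact ⟨B₀, hB₀U, fun hg => absurd hg h⟩
    choose Wg hWgU hWgD using hWch
    obtain ⟨A₀, hA₀U, hA₀X₁, hd⟩ := diag hU hne hX₁U (fun s => Wg (a ∪ s)) (fun s => hWgU _)
    set A : Set ℕ := ↑a ∪ tailSet a A₀ with hA
    have htailU : tailSet a A₀ ∈ U := tail_mem hU hne hA₀U a
    have hAU : A ∈ U := upward hU htailU Set.subset_union_right
    have hAinf := mem_infinite hU hAU
    have hAseg : IsInitSeg a A := by
      refine ⟨Set.subset_union_left, ?_⟩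
      rintro z (hz | hz) hzb y hy
      exacts [absurd hz hzb, hz.2 y hy]
    have haX₁ : ↑a ⊆ X₁ := nbhd_subset_dom hX₁ne
    have hAX₁ : A ⊆ X₁ := by
      rintro z (hz | hz)
      exacts [haX₁ hz, hA₀X₁ (tailSet_subset a A₀ hz)]
    refine ⟨A, hAU, ⟨A, hAinf, hAseg, subset_rfl⟩, ?_⟩
    intro B hB
    have hBX₁ : B ∈ ENbhd a X₁ := nbhd_mono_right hAX₁ hB
    obtain ⟨m, hm, hgood⟩ := hX₁acc B hBX₁
    refine ⟨m, hm, ?_⟩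
    have hBinf : B.Infinite := hB.1
    have hbseg : IsInitSeg (ellR m B) B := ellR_initSeg hBinf m
    have hbD : (ellR m B, Wg (ellR m B)) ∈ D := hWgD _ hgood
    have hbWg : ↑(ellR m B) ⊆ Wg (ellR m B) := nbhd_subset_dom (hD.1 hbD).2
    have hasubb : a ⊆ ellR m B := by
      have h2 : ellR a.card B ⊆ ellR m B := ellR_mono hm.le
      rwa [ellR_eq_of_initseg hBinf hB.2.1] at h2
    have hunion : a ∪ (ellR m B \ a) = ellR m B := Finset.union_sdiff_of_subset hasubb
    have hsA₀ : ↑(ellR m B \ a) ⊆ A₀ := by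
      intro z hz
      have hz' := Finset.mem_sdiff.1 (Finset.mem_coe.1 hz)
      have hzB : z ∈ B := ellR_subset hBinf m (Finset.mem_coe.2 hz'.1)
      rcases hB.2.2 hzB with h | h
      · exact absurd (Finset.mem_coe.1 h) hz'.2
      · exact tailSet_subset a A₀ h
    have hsub : ENbhd (ellR m B) A ⊆ ENbhd (ellR m B) (Wg (ellR m B)) := by
      intro W' hW'
      refine ⟨hW'.1, hW'.2.1, ?_⟩
      intro z hz
      by_cases hzb : z ∈ ellR m B
      · exact hbWg (Finset.mem_coe.2 hzb)
      · have hzgt : ∀ y ∈ ellR m B, y < z := hW'.2.1.2 z hz hzb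
        have hzA₀ : z ∈ A₀ := by
          rcases hW'.2.2 hz with h | h
          · exact absurd (hasubb (Finset.mem_coe.1 h)) hzb
          · exact tailSet_subset a A₀ h
        have h := hd (ellR m B \ a) hsA₀ z hzA₀
          (fun y hy => hzgt y (Finset.sdiff_subset hy))
        rwa [hunion] at h
    exact hD.2.2 (ellR m B, A) ⟨hAU, ⟨B, hBinf, hbseg, hB.2.2⟩⟩
      (ellR m B, Wg (ellR m B)) hbD hsub
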